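/- For x, y ∈ [0, π/2] and z ≥ 0, the real part of G(xi, yi, z) equals (1/2)·log((cosh(z) + cos(x−y))/(cosh(z) + cos(x+y))), which equals −S(xi, yi, z). -/

import Mathlib

open Real Complex

/-- The gap function `G` (logarithmic form, principal branch complex logarithm). -/
noncomputable def G (x y z : ℂ) : ℂ :=
  Complex.log ((Complex.exp x + Complex.exp (y + z)) /
    (Complex.exp (-x) + Complex.exp (y + z)))

/-- The projection function `S` (logarithmic form). -/
noncomputable def S (x y z : ℂ) : ℂ :=
  (1/2) * Complex.log ((Complex.cosh z + Complex.cosh (x + y)) /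
    (Complex.cosh z + Complex.cosh (x - y)))

/-!
Both sides are explicit for purely imaginary `x`, `y` and real `z`:
`|e^{ia} + e^{ib+z}|² = 1 + e^{2z} + 2e^z cos (a - b) = 2e^z (cosh z + cos (a - b))`,
so `Re G = log |num| - log |den|` is half the logarithm of
`(cosh z + cos (x - y)) / (cosh z + cos (x + y))`, while `cosh (xi ± yi) = cos (x ± y)` turns `S`
into half the logarithm of the reciprocal ratio. Since `cosh z + cos t ≥ 0`, that ratio is a
nonnegative real, on which the principal complex logarithm agrees with the real one.
-/

lemma cosh_add_cos_nonneg (z t : ℝ) : 0 ≤ Real.cosh z + Real.cos t := by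
  linarith [Real.one_le_cosh z, Real.neg_one_le_cos t]

lemma Complex.log_norm_eq_half_log_normSq (w : ℂ) :
    Real.log ‖w‖ = 1 / 2 * Real.log (normSq w) := by
  rw [normSq_eq_norm_sq, Real.log_pow]
  push_cast
  ring

lemma normSq_exp_mul_I_add_exp (a b z : ℝ) :
    normSq (exp (a * I) + exp (b * I + z)) =
      2 * Real.exp z * (Real.cosh z + Real.cos (a - b)) := by
  rw [Complex.exp_add, ← ofReal_exp]
  simp only [normSq_apply, add_re, add_im, mul_re, mul_im, exp_ofReal_mul_I_re,
    exp_ofReal_mul_I_im, ofReal_re, ofReal_im, Real.cos_sub, Real.cosh_eq]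
  have hexp : Real.exp z * Real.exp (-z) = 1 := by
    rw [← Real.exp_add, add_neg_cancel, Real.exp_zero]
  linear_combination Real.sin_sq_add_cos_sq a + Real.exp z ^ 2 * Real.sin_sq_add_cos_sq b - hexp

lemma re_G_mul_I (x y z : ℝ) :
    (G (x * I) (y * I) z).re =
      1 / 2 * Real.log ((Real.cosh z + Real.cos (x - y)) / (Real.cosh z + Real.cos (x + y))) := by
  have hden : normSq (exp (-(x * I)) + exp (y * I + z)) =
      2 * Real.exp z * (Real.cosh z + Real.cos (x + y)) := by
    rw [← neg_mul, ← ofReal_neg, normSq_exp_mul_I_add_exp, ← Real.cos_neg (x + y), neg_add']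
  rw [G, log_re, Complex.log_norm_eq_half_log_normSq, normSq_div, normSq_exp_mul_I_add_exp,
    hden, mul_div_mul_left _ _ (by positivity)]

lemma S_mul_I (x y z : ℝ) :
    S (x * I) (y * I) z =
      ((1 / 2 * Real.log ((Real.cosh z + Real.cos (x + y)) / (Real.cosh z + Real.cos (x - y))) : ℝ)
        : ℂ) := by
  have hratio : (Complex.cosh z + Complex.cosh (x * I + y * I)) /
      (Complex.cosh z + Complex.cosh (x * I - y * I)) =
      (((Real.cosh z + Real.cos (x + y)) / (Real.cosh z + Real.cos (x - y)) : ℝ) : ℂ) := by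
    rw [← add_mul, ← sub_mul, ← ofReal_add, ← ofReal_sub, cosh_mul_I, cosh_mul_I]
    push_cast
    rfl
  rw [S, hratio, ← ofReal_log (div_nonneg (cosh_add_cos_nonneg _ _) (cosh_add_cos_nonneg _ _))]
  push_cast
  rfl

theorem re_G_of_two_imaginary_general (x y z : ℝ) :
    (G ((x : ℂ) * Complex.I) ((y : ℂ) * Complex.I) (z : ℂ)).re =
        (1/2) * Real.log ((Real.cosh z + Real.cos (x - y)) /
          (Real.cosh z + Real.cos (x + y))) ∧
      (((G ((x : ℂ) * Complex.I) ((y : ℂ) * Complex.I) (z : ℂ)).re : ℝ) : ℂ) =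
        - S ((x : ℂ) * Complex.I) ((y : ℂ) * Complex.I) (z : ℂ) := by
  refine ⟨re_G_mul_I x y z, ?_⟩
  rw [re_G_mul_I, S_mul_I, ← inv_div (Real.cosh z + Real.cos (x + y)), Real.log_inv]
  push_cast
  ring

theorem re_G_of_two_imaginary (x y z : ℝ) (hz : 0 ≤ z)
    (hx : x ∈ Set.Icc 0 (π/2)) (hy : y ∈ Set.Icc 0 (π/2)) :
    (G ((x : ℂ) * Complex.I) ((y : ℂ) * Complex.I) (z : ℂ)).re =
        (1/2) * Real.log ((Real.cosh z + Real.cos (x - y)) /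
          (Real.cosh z + Real.cos (x + y))) ∧
      (((G ((x : ℂ) * Complex.I) ((y : ℂ) * Complex.I) (z : ℂ)).re : ℝ) : ℂ) =
        - S ((x : ℂ) * Complex.I) ((y : ℂ) * Complex.I) (z : ℂ) :=
  re_G_of_two_imaginary_general x y z
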